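/- arXiv:2502.02248 — 2 statements merged into one kernel-verified Lean document; each statement's English description precedes it below -/
import Mathlib

section
/- Let X₁, …, Xₙ be nonnegative random variables each satisfying the tail bound P(Xᵢ > C t² K) ≤ e^{−t} for all t ≥ 1 (equivalently, ‖Xᵢ‖_{ψ_{1/2}} ≤ C K). Then for every r ≥ 1, with probability at least 1 − e^{−2r}, Σ_{i=1}^n Xᵢ ≤ C' r² n K, where C' depends only on C. -/
open MeasureTheory

private lemma sum_odd_range (m : ℕ) :
    ∑ j ∈ Finset.range m, (2 * (j : ℝ) + 1) = (m : ℝ) ^ 2 := by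
  induction m with
  | zero => simp
  | succ k ih => rw [Finset.sum_range_succ, ih]; push_cast; ring

set_option maxHeartbeats 1000000 in
theorem sum_psi_half_tail_bound (C : ℝ) (hC : 0 < C) :
    ∃ C' : ℝ, 0 < C' ∧
      ∀ (Ω : Type) (_ : MeasurableSpace Ω) (μ : Measure Ω), IsProbabilityMeasure μ →
        ∀ (n : ℕ) (K : ℝ), 0 ≤ K →
          ∀ X : Fin n → Ω → ℝ, (∀ i, Measurable (X i)) → (∀ i ω, 0 ≤ X i ω) →
            (∀ i, ∀ t : ℝ, 1 ≤ t →
              μ {ω | C * t ^ 2 * K < X i ω} ≤ ENNReal.ofReal (Real.exp (-t))) →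
            ∀ r : ℝ, 1 ≤ r →
              ENNReal.ofReal (1 - Real.exp (-2 * r)) ≤
                μ {ω | ∑ i, X i ω ≤ C' * r ^ 2 * n * K} := by
  refine ⟨117 * C, by positivity, ?_⟩
  intro Ω mΩ μ hμ n K hK X hX hXpos htail r hr
  have hone : ENNReal.ofReal (1 - Real.exp (-2 * r)) ≤ 1 := by
    rw [ENNReal.ofReal_le_one]
    have := Real.exp_pos (-2 * r)
    linarith
  by_cases hK0 : K = 0
  · -- degenerate case K = 0 : every X i is a.s. 0
    subst hK0
    have hnull : ∀ i, μ {ω | 0 < X i ω} = 0 := by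
      intro i
      refine le_antisymm ?_ zero_le
      have htend : Filter.Tendsto (fun t : ℝ => ENNReal.ofReal (Real.exp (-t)))
          Filter.atTop (nhds 0) := by
        have := ENNReal.tendsto_ofReal Real.tendsto_exp_neg_atTop_nhds_zero
        simpa using this
      refine ge_of_tendsto htend ?_
      filter_upwards [Filter.eventually_ge_atTop (1 : ℝ)] with t ht
      have := htail i t ht
      simpa using this
    have hcompl : μ {ω | ∑ i, X i ω ≤ 117 * C * r ^ 2 * n * 0}ᶜ = 0 := by
      refine measure_mono_null ?_ (measure_iUnion_null hnull)
      intro ω hω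
      simp only [Set.mem_compl_iff, Set.mem_setOf_eq, not_le, mul_zero] at hω
      by_contra hall
      simp only [Set.mem_iUnion, Set.mem_setOf_eq] at hall
      push_neg at hall
      have : ∑ i, X i ω ≤ 0 := Finset.sum_nonpos fun i _ => hall i
      linarith
    have hms : MeasurableSet {ω | ∑ i, X i ω ≤ 117 * C * r ^ 2 * n * 0} := by
      exact measurableSet_le (Finset.measurable_sum _ fun i _ => hX i) measurable_const
    have := measure_add_measure_compl (μ := μ) hms
    rw [hcompl, add_zero, measure_univ] at this
    rw [this]
    exact hone
  · have hKpos : 0 < K := lt_of_le_of_ne hK (Ne.symm hK0)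
    have hCK : 0 < C * K := mul_pos hC hKpos
    rcases Nat.eq_zero_or_pos n with hn | hn
    · subst hn
      have : {ω : Ω | ∑ i : Fin 0, X i ω ≤ 117 * C * r ^ 2 * (0 : ℕ) * K} = Set.univ := by
        ext ω; simp
      rw [this, measure_univ]
      exact hone
    -- main case
    have hr0 : (0 : ℝ) < r := lt_of_lt_of_le one_pos hr
    set a : ℕ := ⌈8 * r⌉₊ with ha_def
    have ha8 : 8 * r ≤ (a : ℝ) := Nat.le_ceil _
    have ha1 : (1 : ℝ) ≤ (a : ℝ) := by linarith
    have ha9 : (a : ℝ) ≤ 9 * r := by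
      have := Nat.ceil_lt_add_one (by positivity : (0:ℝ) ≤ 8 * r)
      linarith
    set s : Fin n → ℕ → Set Ω := fun i j => {ω | C * (j : ℝ) ^ 2 * K < X i ω} with hs_def
    have hs_meas : ∀ i j, MeasurableSet (s i j) := fun i j =>
      measurableSet_lt measurable_const (hX i)
    set f : Fin n → ℕ → Ω → ENNReal := fun i j =>
      if a ≤ j then (s i j).indicator (fun _ => ENNReal.ofReal (C * K * (2 * (j : ℝ) + 1)))
      else 0 with hf_def
    have hf_meas : ∀ i j, Measurable (f i j) := by
      intro i j
      simp only [hf_def]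
      split
      · exact Measurable.indicator measurable_const (hs_meas i j)
      · exact measurable_const
    set excess : Ω → ENNReal := fun ω => ∑ i, ∑' j : ℕ, f i j ω with hexcess_def
    have hexcess_meas : Measurable excess :=
      Finset.measurable_sum _ fun i _ => Measurable.ennreal_tsum fun j => hf_meas i j
    -- pointwise bound
    have hpoint : ∀ ω (i : Fin n),
        ENNReal.ofReal (X i ω) ≤ ENNReal.ofReal (C * K * (a : ℝ) ^ 2) + ∑' j : ℕ, f i j ω := by
      intro ω i
      by_cases hx : X i ω ≤ C * K * (a : ℝ) ^ 2
      · exact le_trans (ENNReal.ofReal_le_ofReal hx) le_self_add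
      push_neg at hx
      set x := X i ω with hxdef
      have hx0 : 0 < x := lt_of_le_of_lt (by positivity) hx
      set m : ℕ := ⌈Real.sqrt (x / (C * K))⌉₊ with hm_def
      have hdivpos : 0 < x / (C * K) := div_pos hx0 hCK
      have hsq : Real.sqrt (x / (C * K)) ^ 2 = x / (C * K) := Real.sq_sqrt hdivpos.le
      have hxm : x ≤ C * K * (m : ℝ) ^ 2 := by
        have h1 : Real.sqrt (x / (C * K)) ≤ (m : ℝ) := Nat.le_ceil _
        have h2 : x / (C * K) ≤ (m : ℝ) ^ 2 := by
          nlinarith [Real.sqrt_nonneg (x / (C * K))]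
        have := (div_le_iff₀ hCK).mp h2
        nlinarith
      have ham : a < m := by
        by_contra h
        push_neg at h
        have hcast : (m : ℝ) ≤ (a : ℝ) := Nat.cast_le.mpr h
        have hm2 : (m : ℝ) ^ 2 ≤ (a : ℝ) ^ 2 := by
          nlinarith [Nat.cast_nonneg (α := ℝ) m]
        nlinarith [mul_le_mul_of_nonneg_left hm2 hCK.le]
      have hsub : ∀ j ∈ Finset.Ico a m, ω ∈ s i j := by
        intro j hj
        obtain ⟨hja, hjm⟩ := Finset.mem_Ico.mp hj
        have hjs : (j : ℝ) < Real.sqrt (x / (C * K)) := by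
          by_contra h
          push_neg at h
          have : m ≤ j := Nat.ceil_le.mpr h
          omega
        have hj2 : (j : ℝ) ^ 2 < x / (C * K) := by
          nlinarith [Nat.cast_nonneg (α := ℝ) j, Real.sqrt_nonneg (x / (C * K))]
        have : (j : ℝ) ^ 2 * (C * K) < x := by
          rwa [← lt_div_iff₀ hCK]
        simp only [hs_def, Set.mem_setOf_eq]
        nlinarith
      have hfin : ∑ j ∈ Finset.Ico a m, f i j ω
          = ENNReal.ofReal (C * K * ((m : ℝ) ^ 2 - (a : ℝ) ^ 2)) := by
        have hcongr : ∀ j ∈ Finset.Ico a m,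
            f i j ω = ENNReal.ofReal (C * K * (2 * (j : ℝ) + 1)) := by
          intro j hj
          obtain ⟨hja, hjm⟩ := Finset.mem_Ico.mp hj
          simp only [hf_def, if_pos hja]
          exact Set.indicator_of_mem (hsub j hj) _
        rw [Finset.sum_congr rfl hcongr,
          ← ENNReal.ofReal_sum_of_nonneg (fun j _ => by positivity)]
        congr 1
        rw [← Finset.mul_sum, Finset.sum_Ico_eq_sub _ ham.le, sum_odd_range, sum_odd_range]
      have hamR : (a : ℝ) < (m : ℝ) := Nat.cast_lt.mpr ham
      have hma0 : (0 : ℝ) ≤ (m : ℝ) ^ 2 - (a : ℝ) ^ 2 := by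
        nlinarith [Nat.cast_nonneg (α := ℝ) a]
      have hge : ENNReal.ofReal (C * K * ((m : ℝ) ^ 2 - (a : ℝ) ^ 2)) ≤ ∑' j : ℕ, f i j ω := by
        rw [← hfin]; exact ENNReal.sum_le_tsum _
      calc ENNReal.ofReal x
          ≤ ENNReal.ofReal (C * K * (a : ℝ) ^ 2 + C * K * ((m : ℝ) ^ 2 - (a : ℝ) ^ 2)) :=
            ENNReal.ofReal_le_ofReal (by nlinarith [hxm])
        _ = ENNReal.ofReal (C * K * (a : ℝ) ^ 2)
              + ENNReal.ofReal (C * K * ((m : ℝ) ^ 2 - (a : ℝ) ^ 2)) :=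
            ENNReal.ofReal_add (by positivity) (by positivity)
        _ ≤ _ := add_le_add_right hge _
    -- expectation bound
    have hterm : ∀ (i : Fin n) (j : ℕ),
        ∫⁻ ω, f i j ω ∂μ ≤
          ENNReal.ofReal (12 * (C * K) * Real.exp (-(2 * r)))
            * (ENNReal.ofReal (Real.exp (-(1 / 2 : ℝ)))) ^ j := by
      intro i j
      by_cases hja : a ≤ j
      · have hj1 : (1 : ℝ) ≤ (j : ℝ) := le_trans ha1 (Nat.cast_le.mpr hja)
        have hint : ∫⁻ ω, f i j ω ∂μ
            = ENNReal.ofReal (C * K * (2 * (j : ℝ) + 1)) * μ (s i j) := by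
          simp only [hf_def, if_pos hja]
          exact lintegral_indicator_const (hs_meas i j) _
        rw [hint]
        have htailj : μ (s i j) ≤ ENNReal.ofReal (Real.exp (-(j : ℝ))) := htail i (j : ℝ) hj1
        calc ENNReal.ofReal (C * K * (2 * (j : ℝ) + 1)) * μ (s i j)
            ≤ ENNReal.ofReal (C * K * (2 * (j : ℝ) + 1))
                * ENNReal.ofReal (Real.exp (-(j : ℝ))) := by
              exact mul_le_mul_right htailj _
          _ = ENNReal.ofReal (C * K * (2 * (j : ℝ) + 1) * Real.exp (-(j : ℝ))) :=
              (ENNReal.ofReal_mul (by positivity)).symm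
          _ ≤ ENNReal.ofReal (12 * (C * K) * Real.exp (-(2 * r)) * Real.exp (-(1/2 : ℝ)) ^ j) := by
              apply ENNReal.ofReal_le_ofReal
              have hjR : 8 * r ≤ (j : ℝ) := le_trans ha8 (le_trans (Nat.cast_le.mpr hja) le_rfl)
              -- (2j+1) e^{-j} ≤ 12 e^{-2r} e^{-j/2}
              have he1 : Real.exp (-(1/2 : ℝ)) ^ j = Real.exp (-(j : ℝ) / 2) := by
                rw [← Real.exp_nat_mul]; congr 1; ring
              rw [he1]
              have h1 : 2 * (j : ℝ) + 1 ≤ 12 * Real.exp ((j : ℝ) / 2 - 2 * r) := by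
                have hA : Real.exp ((j : ℝ) / 4) ≤ Real.exp ((j : ℝ) / 2 - 2 * r) :=
                  Real.exp_le_exp.mpr (by linarith)
                have hB : (j : ℝ) / 4 + 1 ≤ Real.exp ((j : ℝ) / 4) := Real.add_one_le_exp _
                nlinarith
              have hkey : (2 * (j : ℝ) + 1) * Real.exp (-(j : ℝ))
                  ≤ 12 * Real.exp (-(2 * r)) * Real.exp (-(j : ℝ) / 2) := by
                calc (2 * (j : ℝ) + 1) * Real.exp (-(j : ℝ))
                    ≤ 12 * Real.exp ((j : ℝ) / 2 - 2 * r) * Real.exp (-(j : ℝ)) :=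
                      mul_le_mul_of_nonneg_right h1 (Real.exp_nonneg _)
                  _ = 12 * Real.exp (-(2 * r)) * Real.exp (-(j : ℝ) / 2) := by
                      rw [mul_assoc, mul_assoc, ← Real.exp_add, ← Real.exp_add]
                      congr 2
                      ring
              nlinarith [Real.exp_pos (-(j:ℝ)/2), Real.exp_pos (-(2*r)), hkey]
          _ = _ := by
              rw [ENNReal.ofReal_mul (by positivity), ENNReal.ofReal_pow (by positivity)]
      · simp only [hf_def, if_neg hja]
        simp
    have hgeom : ∑' j : ℕ, (ENNReal.ofReal (Real.exp (-(1 / 2 : ℝ)))) ^ j ≤ 3 := by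
      rw [ENNReal.tsum_geometric]
      have h32 : (3 : ℝ) / 2 ≤ Real.exp (1 / 2) := by
        have := Real.add_one_le_exp (1 / 2 : ℝ); linarith
      have hle : Real.exp (-(1 / 2 : ℝ)) ≤ 2 / 3 := by
        have hprod : Real.exp (-(1 / 2 : ℝ)) * Real.exp (1 / 2 : ℝ) = 1 := by
          rw [← Real.exp_add]; norm_num
        have hnn := mul_nonneg (Real.exp_nonneg (-(1 / 2 : ℝ)))
          (by linarith : (0 : ℝ) ≤ Real.exp (1 / 2) - 3 / 2)
        nlinarith
      rw [show (3 : ENNReal) = ((3 : ENNReal)⁻¹)⁻¹ by simp, ENNReal.inv_le_inv]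
      have hq : ENNReal.ofReal (Real.exp (-(1 / 2 : ℝ))) ≤ ENNReal.ofReal (2 / 3) :=
        ENNReal.ofReal_le_ofReal hle
      have h13 : (3 : ENNReal)⁻¹ ≤ 1 - ENNReal.ofReal (2 / 3) := by
        have e1 : (1 : ENNReal) - ENNReal.ofReal (2 / 3) = ENNReal.ofReal (1 / 3) := by
          rw [← ENNReal.ofReal_one, ← ENNReal.ofReal_sub _ (by norm_num : (0:ℝ) ≤ 2/3)]
          norm_num
        rw [e1, show (1 / 3 : ℝ) = (3 : ℝ)⁻¹ by norm_num,
          ENNReal.ofReal_inv_of_pos (by norm_num : (0:ℝ) < 3)]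
        simp
      exact le_trans h13 (tsub_le_tsub_left hq 1)
    have hE : ∫⁻ ω, excess ω ∂μ
        ≤ ENNReal.ofReal (Real.exp (-(2*r))) * ENNReal.ofReal ((n : ℝ) * (36 * (C * K))) := by
      have hE1 : ∫⁻ ω, excess ω ∂μ = ∑ i : Fin n, ∑' j : ℕ, ∫⁻ ω, f i j ω ∂μ := by
        simp only [hexcess_def]
        rw [lintegral_finset_sum _ (fun i _ => Measurable.ennreal_tsum fun j => hf_meas i j)]
        exact Finset.sum_congr rfl fun i _ => lintegral_tsum fun j => (hf_meas i j).aemeasurable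
      rw [hE1]
      have hper : ∀ i : Fin n, ∑' j : ℕ, ∫⁻ ω, f i j ω ∂μ
          ≤ ENNReal.ofReal (Real.exp (-(2*r))) * ENNReal.ofReal (36 * (C * K)) := by
        intro i
        calc ∑' j : ℕ, ∫⁻ ω, f i j ω ∂μ
            ≤ ∑' j : ℕ, ENNReal.ofReal (12 * (C * K) * Real.exp (-(2 * r)))
                * (ENNReal.ofReal (Real.exp (-(1 / 2 : ℝ)))) ^ j :=
              ENNReal.tsum_le_tsum (hterm i)
          _ = ENNReal.ofReal (12 * (C * K) * Real.exp (-(2 * r)))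
                * ∑' j : ℕ, (ENNReal.ofReal (Real.exp (-(1 / 2 : ℝ)))) ^ j :=
              ENNReal.tsum_mul_left
          _ ≤ ENNReal.ofReal (12 * (C * K) * Real.exp (-(2 * r))) * 3 :=
              mul_le_mul_right hgeom _
          _ = ENNReal.ofReal (Real.exp (-(2*r))) * ENNReal.ofReal (36 * (C * K)) := by
              rw [show (3 : ENNReal) = ENNReal.ofReal 3 by norm_num,
                ← ENNReal.ofReal_mul (by positivity),
                ← ENNReal.ofReal_mul (Real.exp_nonneg _)]
              congr 1
              ring
      calc ∑ i : Fin n, ∑' j : ℕ, ∫⁻ ω, f i j ω ∂μ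
          ≤ ∑ _i : Fin n, ENNReal.ofReal (Real.exp (-(2*r))) * ENNReal.ofReal (36 * (C * K)) :=
            Finset.sum_le_sum fun i _ => hper i
        _ = (n : ENNReal) * (ENNReal.ofReal (Real.exp (-(2*r))) * ENNReal.ofReal (36 * (C * K))) := by
            rw [Finset.sum_const, Finset.card_univ, Fintype.card_fin, nsmul_eq_mul]
        _ = ENNReal.ofReal (Real.exp (-(2*r))) * ENNReal.ofReal ((n : ℝ) * (36 * (C * K))) := by
            rw [ENNReal.ofReal_mul (Nat.cast_nonneg n), ENNReal.ofReal_natCast]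
            ring
    -- Markov
    set ε : ENNReal := ENNReal.ofReal ((n : ℝ) * (36 * (C * K))) with hε_def
    have hε0 : ε ≠ 0 := by
      simp only [hε_def, ne_eq, ENNReal.ofReal_eq_zero, not_le]
      have : (0:ℝ) < (n:ℝ) := by exact_mod_cast hn
      positivity
    have hεtop : ε ≠ ⊤ := ENNReal.ofReal_ne_top
    have hmarkov : μ {ω | ε ≤ excess ω} ≤ ENNReal.ofReal (Real.exp (-(2*r))) := by
      refine le_trans (meas_ge_le_lintegral_div hexcess_meas.aemeasurable hε0 hεtop) ?_
      exact ENNReal.div_le_of_le_mul hE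
    -- good event
    have hgood : {ω | excess ω < ε} ⊆ {ω | ∑ i, X i ω ≤ 117 * C * r ^ 2 * n * K} := by
      intro ω hω
      simp only [Set.mem_setOf_eq] at hω ⊢
      have h1 : ENNReal.ofReal (∑ i, X i ω)
          ≤ ENNReal.ofReal ((n:ℝ) * (C * K * (a : ℝ) ^ 2)) + excess ω := by
        rw [ENNReal.ofReal_sum_of_nonneg (fun i _ => hXpos i ω)]
        calc ∑ i, ENNReal.ofReal (X i ω)
            ≤ ∑ i : Fin n, (ENNReal.ofReal (C * K * (a : ℝ) ^ 2) + ∑' j : ℕ, f i j ω) :=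
              Finset.sum_le_sum fun i _ => hpoint ω i
          _ = (n : ENNReal) * ENNReal.ofReal (C * K * (a : ℝ) ^ 2) + excess ω := by
              rw [Finset.sum_add_distrib, Finset.sum_const, Finset.card_univ, Fintype.card_fin]
              simp [nsmul_eq_mul, hexcess_def]
          _ = _ := by
              rw [← ENNReal.ofReal_natCast n, ← ENNReal.ofReal_mul (Nat.cast_nonneg n)]
      have h2 : ENNReal.ofReal (∑ i, X i ω)
          ≤ ENNReal.ofReal ((n:ℝ) * (C * K * (a : ℝ) ^ 2) + (n : ℝ) * (36 * (C * K))) := by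
        rw [ENNReal.ofReal_add (by positivity) (by positivity)]
        exact le_trans h1 (add_le_add_right hω.le _)
      have h3 : (n:ℝ) * (C * K * (a : ℝ) ^ 2) + (n : ℝ) * (36 * (C * K))
          ≤ 117 * C * r ^ 2 * n * K := by
        have hnn : (0:ℝ) ≤ (n:ℝ) := Nat.cast_nonneg n
        have ha2 : (a : ℝ) ^ 2 ≤ 81 * r ^ 2 := by nlinarith
        have h36 : (36 : ℝ) ≤ 36 * r ^ 2 := by nlinarith
        nlinarith [mul_nonneg hnn hCK.le]
      exact (ENNReal.ofReal_le_ofReal_iff (by positivity)).mp (le_trans h2 (ENNReal.ofReal_le_ofReal h3))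
    -- assemble
    have hGmeas : MeasurableSet {ω | excess ω < ε} := measurableSet_lt hexcess_meas measurable_const
    have hcompl_eq : {ω | excess ω < ε}ᶜ = {ω | ε ≤ excess ω} := by
      ext ω; simp [not_lt]
    have hμG : ENNReal.ofReal (1 - Real.exp (-2 * r)) ≤ μ {ω | excess ω < ε} := by
      have hsum := measure_add_measure_compl (μ := μ) hGmeas
      rw [hcompl_eq, measure_univ] at hsum
      have h2r : (-(2*r) : ℝ) = -2 * r := by ring
      rw [ENNReal.ofReal_sub _ (Real.exp_nonneg _), ENNReal.ofReal_one]
      rw [tsub_le_iff_right]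
      calc (1 : ENNReal) = μ {ω | excess ω < ε} + μ {ω | ε ≤ excess ω} := hsum.symm
        _ ≤ μ {ω | excess ω < ε} + ENNReal.ofReal (Real.exp (-2 * r)) := by
            refine add_le_add_right ?_ _
            rw [show (-2 * r : ℝ) = -(2*r) by ring]
            exact hmarkov
    exact le_trans hμG (measure_mono hgood)
end

section
/- Suppose that for every i, |d_i − np| ≤ L (np)^{α+1/2} with L (np)^{α+1/2} < np, where d_i > 0, n p > 0, and 0 < α < 1/2. Define v₀(i) = √(d_i)/√(Σ_j d_j). Then ‖v₀ − 1̄/√n‖₂ ≤ L' / (np)^{1/2 − α} for a constant L' depending only on L and α. -/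
lemma sqrt_diff_le_aux {x y : ℝ} (hx : 0 ≤ x) (hy : 0 < y) :
    |Real.sqrt x - Real.sqrt y| ≤ |x - y| / Real.sqrt y := by
  have hsy : 0 < Real.sqrt y := Real.sqrt_pos.mpr hy
  have hsx : 0 ≤ Real.sqrt x := Real.sqrt_nonneg x
  have key : |Real.sqrt x - Real.sqrt y| * (Real.sqrt x + Real.sqrt y) = |x - y| := by
    rw [← abs_of_nonneg (by positivity : (0:ℝ) ≤ Real.sqrt x + Real.sqrt y), ← abs_mul]
    congr 1
    have h1 : Real.sqrt x * Real.sqrt x = x := Real.mul_self_sqrt hx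
    have h2 : Real.sqrt y * Real.sqrt y = y := Real.mul_self_sqrt hy.le
    ring_nf
    nlinarith [h1, h2]
  rw [le_div_iff₀ hsy]
  calc |Real.sqrt x - Real.sqrt y| * Real.sqrt y
      ≤ |Real.sqrt x - Real.sqrt y| * (Real.sqrt x + Real.sqrt y) := by
        apply mul_le_mul_of_nonneg_left (by linarith) (abs_nonneg _)
    _ = |x - y| := key

theorem eigenvector_delocalization (L α : ℝ) (hL : 0 < L) (hα₀ : 0 < α) (hα : α < 1 / 2) :
    ∃ L' : ℝ, 0 < L' ∧ ∀ (n : ℕ) (p : ℝ), 0 < n → 0 < p → p ≤ 1 →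
      ∀ d : Fin n → ℝ, (∀ i, 0 < d i) →
        (∀ i, |d i - n * p| ≤ L * ((n : ℝ) * p) ^ (α + 1 / 2 : ℝ)) →
        L * ((n : ℝ) * p) ^ (α + 1 / 2 : ℝ) < n * p →
        ∀ v₀ : Fin n → ℝ,
          (∀ i, v₀ i = Real.sqrt (d i) / Real.sqrt (∑ j, d j)) →
          Real.sqrt (∑ i, (v₀ i - 1 / Real.sqrt n) ^ 2) ≤
            L' / ((n : ℝ) * p) ^ (1 / 2 - α : ℝ) := by
  refine ⟨4 * L, by positivity, ?_⟩
  intro n p hn hp hp1 d hd hdb hEs v₀ hv₀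
  have hn' : (0:ℝ) < n := by exact_mod_cast hn
  set s : ℝ := (n : ℝ) * p with hs_def
  have hs : 0 < s := by positivity
  set E : ℝ := L * s ^ (α + 1 / 2 : ℝ) with hE_def
  have hE : 0 < E := by positivity
  set ε : ℝ := E / s with hε_def
  have hε : 0 < ε := by positivity
  -- RHS equals 4 ε
  have hrpow : s ^ ((1:ℝ) / 2 - α) * s ^ (α + 1 / 2 : ℝ) = s := by
    rw [← Real.rpow_add hs]
    have h : (1:ℝ) / 2 - α + (α + 1 / 2) = 1 := by ring
    rw [h, Real.rpow_one]
  have hrpos : 0 < s ^ ((1:ℝ) / 2 - α) := Real.rpow_pos_of_pos hs _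
  have hRHS : 4 * L / s ^ ((1:ℝ) / 2 - α) = 4 * ε := by
    rw [hε_def, hE_def, mul_div_assoc', div_eq_div_iff hrpos.ne' hs.ne']
    nlinarith [hrpow]
  rw [hRHS]
  -- basic facts
  have hne : Nonempty (Fin n) := Fin.pos_iff_nonempty.mp hn
  set D : ℝ := ∑ j, d j with hD_def
  have hD : 0 < D := Finset.sum_pos (fun i _ => hd i) Finset.univ_nonempty
  have hsqn : Real.sqrt n * Real.sqrt n = (n:ℝ) := Real.mul_self_sqrt hn'.le
  have hsqn' : (0:ℝ) < Real.sqrt n := Real.sqrt_pos.mpr hn'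
  by_cases hcase : ε < 1 / 2
  · -- main case: pointwise bound |v₀ i - 1/√n| ≤ 4 ε / √n
    have hEhalf : E < s / 2 := by
      have := (div_lt_iff₀ hs).mp hcase
      linarith
    have hDlow : (n:ℝ) * (s / 2) ≤ D := by
      have : ∀ j ∈ Finset.univ, s / 2 ≤ d j := by
        intro j _
        have h := abs_le.mp (hdb j)
        linarith [h.1]
      calc (n:ℝ) * (s / 2) = ∑ _j : Fin n, (s/2) := by
            simp [Finset.sum_const, Finset.card_univ, mul_comm]
        _ ≤ D := Finset.sum_le_sum this
    have hpt : ∀ i, |v₀ i - 1 / Real.sqrt n| ≤ 4 * ε / Real.sqrt n := by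
      intro i
      have hvi : v₀ i = Real.sqrt (d i / D) := by
        rw [hv₀ i, Real.sqrt_div (hd i).le]
      have hinv : (1:ℝ) / Real.sqrt n = Real.sqrt (1 / (n:ℝ)) := by
        rw [one_div, one_div, Real.sqrt_inv]
      rw [hvi, hinv]
      have h1 : |d i / D - 1 / (n:ℝ)| ≤ 4 * ε / (n:ℝ) := by
        have hnum : |(n:ℝ) * d i - D| ≤ 2 * n * E := by
          have heq : (n:ℝ) * d i - D = ∑ j, (d i - d j) := by
            simp [Finset.sum_sub_distrib, Finset.sum_const, Finset.card_univ, hD_def]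
          rw [heq]
          calc |∑ j, (d i - d j)| ≤ ∑ j : Fin n, |d i - d j| :=
                Finset.abs_sum_le_sum_abs _ _
            _ ≤ ∑ _j : Fin n, (2 * E) := by
                apply Finset.sum_le_sum
                intro j _
                have h1 := hdb i
                have h2 := hdb j
                calc |d i - d j| ≤ |d i - s| + |s - d j| := abs_sub_le _ _ _
                  _ = |d i - s| + |d j - s| := by rw [abs_sub_comm s]
                  _ ≤ 2 * E := by linarith
            _ = 2 * n * E := by
                simp [Finset.sum_const, Finset.card_univ]; ring
        have heq2 : d i / D - 1 / (n:ℝ) = ((n:ℝ) * d i - D) / ((n:ℝ) * D) := by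
          field_simp
        rw [heq2, abs_div, abs_of_pos (by positivity : (0:ℝ) < (n:ℝ) * D)]
        have hden : (n:ℝ) * ((n:ℝ) * (s/2)) ≤ (n:ℝ) * D :=
          mul_le_mul_of_nonneg_left hDlow hn'.le
        calc |(n:ℝ) * d i - D| / ((n:ℝ) * D)
            ≤ (2 * n * E) / ((n:ℝ) * ((n:ℝ) * (s/2))) := by
              apply div_le_div₀ (by positivity) hnum (by positivity) hden
          _ = 4 * ε / (n:ℝ) := by
              rw [hε_def]
              field_simp
              ring
      calc |Real.sqrt (d i / D) - Real.sqrt (1 / (n:ℝ))|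
          ≤ |d i / D - 1 / (n:ℝ)| / Real.sqrt (1 / (n:ℝ)) :=
            sqrt_diff_le_aux (div_nonneg (hd i).le hD.le) (by positivity)
        _ ≤ (4 * ε / (n:ℝ)) / Real.sqrt (1 / (n:ℝ)) := by
            gcongr
        _ = 4 * ε / Real.sqrt n := by
            rw [← hinv, div_div, show ((n:ℝ)) * (1 / Real.sqrt n) = Real.sqrt n from by
              rw [show ((n:ℝ)) = Real.sqrt n * Real.sqrt n from hsqn.symm]; field_simp; rw [Real.sqrt_sq hsqn'.le]]
    have hsum : ∑ i, (v₀ i - 1 / Real.sqrt n) ^ 2 ≤ (4 * ε) ^ 2 := by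
      calc ∑ i, (v₀ i - 1 / Real.sqrt n) ^ 2
          ≤ ∑ _i : Fin n, (4 * ε / Real.sqrt n) ^ 2 := by
            apply Finset.sum_le_sum
            intro i _
            have := hpt i
            calc (v₀ i - 1 / Real.sqrt n) ^ 2 = |v₀ i - 1 / Real.sqrt n| ^ 2 := (sq_abs _).symm
              _ ≤ (4 * ε / Real.sqrt n) ^ 2 := by
                  apply pow_le_pow_left₀ (abs_nonneg _) this
        _ = (n:ℝ) * (4 * ε / Real.sqrt n) ^ 2 := by
            rw [Finset.sum_const, Finset.card_univ, Fintype.card_fin, nsmul_eq_mul]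
        _ = (4 * ε) ^ 2 := by
            rw [div_pow]
            rw [show Real.sqrt n ^ 2 = (n:ℝ) by rw [sq]; exact hsqn]
            field_simp
    calc Real.sqrt (∑ i, (v₀ i - 1 / Real.sqrt n) ^ 2)
        ≤ Real.sqrt ((4 * ε) ^ 2) := Real.sqrt_le_sqrt hsum
      _ = 4 * ε := Real.sqrt_sq (by positivity)
  · -- crude case: ε ≥ 1/2, bound LHS by 2 ≤ 4 ε
    push_neg at hcase
    have hnorm : ∑ i, (v₀ i) ^ 2 = 1 := by
      have : ∀ i, (v₀ i) ^ 2 = d i / D := by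
        intro i
        rw [hv₀ i, div_pow, sq, sq, Real.mul_self_sqrt (hd i).le,
          Real.mul_self_sqrt hD.le]
      simp only [this]
      rw [← Finset.sum_div, ← hD_def, div_self hD.ne']
    have hsum : ∑ i, (v₀ i - 1 / Real.sqrt n) ^ 2 ≤ 4 := by
      have hbd : ∀ i ∈ Finset.univ, (v₀ i - 1 / Real.sqrt n) ^ 2
          ≤ 2 * (v₀ i) ^ 2 + 2 * (1 / Real.sqrt n) ^ 2 := by
        intro i _
        nlinarith [sq_nonneg (v₀ i + 1 / Real.sqrt n)]
      calc ∑ i, (v₀ i - 1 / Real.sqrt n) ^ 2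
          ≤ ∑ i, (2 * (v₀ i) ^ 2 + 2 * (1 / Real.sqrt n) ^ 2) :=
            Finset.sum_le_sum hbd
        _ = 2 * (∑ i, (v₀ i) ^ 2) + (n:ℝ) * (2 * (1 / Real.sqrt n) ^ 2) := by
            rw [Finset.sum_add_distrib, ← Finset.mul_sum, Finset.sum_const,
              Finset.card_univ, Fintype.card_fin, nsmul_eq_mul]
        _ = 4 := by
            rw [hnorm]
            rw [div_pow, one_pow, show Real.sqrt n ^ 2 = (n:ℝ) by rw [sq]; exact hsqn]
            field_simp
            norm_num
    calc Real.sqrt (∑ i, (v₀ i - 1 / Real.sqrt n) ^ 2)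
        ≤ Real.sqrt 4 := Real.sqrt_le_sqrt hsum
      _ = 2 := by
          rw [show (4:ℝ) = 2 ^ 2 by norm_num, Real.sqrt_sq (by norm_num)]
      _ ≤ 4 * ε := by linarith
end
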